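/- Let l ≥ 1 and m ≥ 1 be natural numbers, τ > 0, t ∈ ℝ, and let ξ : ℝ → ℝ be (l+1)-times continuously differentiable on the interval [t − lτ, t + mτ]. For each p ∈ {1, …, l+1}, let B_p ≥ 0 satisfy |ξ^{(p)}(s)| ≤ B_p for all s ∈ [t − lτ, t + mτ]. Let P̄_l(s) = ξ(t) + Σ_{p=1}^{l} (∇^p_τ ξ(t)/p!)(s−t)^p be the approximated Taylor polynomial of degree l at t. Then |ξ(t + mτ) − P̄_l(t + mτ)| ≤ (B_{l+1} / (l+1)!) · (mτ)^{l+1} + Σ_{p=1}^{l} ((mτ)^p / p!) · (τ · B_{p+1} / (p+1)!) · Σ_{j=1}^{p} (p choose j) · j^{p+1}. -/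

import Mathlib

/-!
Write `ξ = T + R` with `T` the degree-`p` Taylor polynomial of `ξ` at `t` (derivatives taken
within the interval); by the Lagrange form, `|R (t - jτ)| ≤ B_{p+1} (jτ)^{p+1} / (p+1)!`.
In the node index `j`, the backward difference is a `p`-th forward difference of step `1`: it
annihilates `j ^ k` for `k < p` and sends `j ^ p` to `p!`, so `∇^p_τ T(t) = ξ^{(p)}(t)` exactly,
and the error of `∇^p_τ ξ(t)` is `τ^{-p}` times a binomial combination of the remainders. The
prediction error is the Lagrange remainder of degree `l` at `t + mτ` plus these errors weighted
by the Taylor coefficients `(mτ)^p / p!`.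
-/

/-- The backward-difference approximation of the `p`-th derivative of `ξ` at `t`
with step size `τ`: `∇^p_τ ξ(t) = τ^{-p} · Σ_{j=0}^{p} (-1)^j (p choose j) ξ(t - jτ)`. -/
noncomputable def bdApprox (ξ : ℝ → ℝ) (τ : ℝ) (p : ℕ) (t : ℝ) : ℝ :=
  τ ^ (-(p : ℤ)) *
    ∑ j ∈ Finset.range (p + 1), (-1 : ℝ) ^ j * (p.choose j : ℝ) * ξ (t - j * τ)

open Set Nat

theorem Finset.sum_range_succ_eq_add_sum_Icc {M : Type*} [AddCommMonoid M] (f : ℕ → M) (n : ℕ) :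
    ∑ k ∈ Finset.range (n + 1), f k = f 0 + ∑ k ∈ Finset.Icc 1 n, f k := by
  rw [Nat.range_succ_eq_Icc_zero, ← Finset.insert_Icc_add_one_left_eq_Icc n.zero_le,
    Finset.sum_insert (by simp), zero_add]

theorem taylorWithinEval_eq_add_sum_Icc (f : ℝ → ℝ) (n : ℕ) (s : Set ℝ) (x₀ x : ℝ) :
    taylorWithinEval f n s x₀ x
      = f x₀ + ∑ k ∈ Finset.Icc 1 n, iteratedDerivWithin k f s x₀ / k ! * (x - x₀) ^ k := by
  rw [taylor_within_apply, Finset.sum_range_succ_eq_add_sum_Icc]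
  simp only [factorial_zero, cast_one, inv_one, pow_zero, mul_one, one_mul, smul_eq_mul,
    iteratedDerivWithin_zero]
  exact congrArg _ (Finset.sum_congr rfl fun k _ => by ring)

section Taylor

variable {f : ℝ → ℝ} {s t : Set ℝ}

theorem iteratedDerivWithin_eq_of_subset {n : ℕ} (hst : s ⊆ t) (hs : UniqueDiffOn ℝ s)
    (ht : UniqueDiffOn ℝ t) (hf : ContDiffOn ℝ n f t) {x : ℝ} (hx : x ∈ s) :
    iteratedDerivWithin n f s x = iteratedDerivWithin n f t x := by
  simp only [iteratedDerivWithin_eq_iteratedFDerivWithin,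
    iteratedFDerivWithin_subset hst hs ht hf hx]

theorem taylorWithinEval_eq_of_subset {n : ℕ} (hst : s ⊆ t) (hs : UniqueDiffOn ℝ s)
    (ht : UniqueDiffOn ℝ t) (hf : ContDiffOn ℝ n f t) {x₀ : ℝ} (hx₀ : x₀ ∈ s) (x : ℝ) :
    taylorWithinEval f n s x₀ x = taylorWithinEval f n t x₀ x := by
  simp only [taylor_within_apply]
  refine Finset.sum_congr rfl fun k hk => ?_
  have hkn : k ≤ n := Finset.mem_range_succ_iff.mp hk
  rw [iteratedDerivWithin_eq_of_subset hst hs ht (hf.of_le (by exact_mod_cast hkn)) hx₀]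

theorem abs_sub_taylorWithinEval_Icc_le {a b C x₀ x : ℝ} {n : ℕ}
    (hf : ContDiffOn ℝ (n + 1) f (Icc a b)) (hx₀ : x₀ ∈ Icc a b) (hx : x ∈ Icc a b)
    (hC : ∀ y ∈ Icc a b, |iteratedDerivWithin (n + 1) f (Icc a b) y| ≤ C) :
    |f x - taylorWithinEval f n (Icc a b) x₀ x| ≤ C * |x - x₀| ^ (n + 1) / (n + 1)! := by
  rcases eq_or_ne x₀ x with rfl | hne
  · simp [taylorWithinEval_self]
  have hab : a < b := by
    rcases hne.lt_or_gt with h | h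
    · exact hx₀.1.trans_lt (h.trans_le hx.2)
    · exact hx.1.trans_lt (h.trans_le hx₀.2)
  have hsub : uIcc x₀ x ⊆ Icc a b := uIcc_subset_Icc hx₀ hx
  have hu : UniqueDiffOn ℝ (uIcc x₀ x) := uniqueDiffOn_uIcc hne
  have hI : UniqueDiffOn ℝ (Icc a b) := uniqueDiffOn_Icc hab
  have hfu : ContDiffOn ℝ (n + 1) f (uIcc x₀ x) := hf.mono hsub
  obtain ⟨y, hy, hrem⟩ := taylor_mean_remainder_lagrange hne hfu.of_succ
    ((hfu.differentiableOn_iteratedDerivWithin (by norm_cast; omega) hu).mono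
      uIoo_subset_uIcc_self)
  have hyu : y ∈ uIcc x₀ x := uIoo_subset_uIcc_self hy
  rw [← taylorWithinEval_eq_of_subset hsub hu hI hf.of_succ left_mem_uIcc, hrem,
    iteratedDerivWithin_eq_of_subset hsub hu hI (by exact_mod_cast hf) hyu,
    abs_div, abs_mul, abs_pow, Nat.abs_cast]
  gcongr
  exact hC y (hsub hyu)

end Taylor

section BackwardDifference

section CommRing

variable {R : Type*} [CommRing R]

theorem fwdDiff_iter_sum_mul_pow_eq_mul_factorial (c : ℕ → R) (p : ℕ) :
    (fwdDiff 1)^[p] (fun r : R => ∑ k ∈ Finset.range (p + 1), c k * r ^ k)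
      = fun _ => c p * p ! := by
  have hsplit : (fun r : R => ∑ k ∈ Finset.range (p + 1), c k * r ^ k)
      = (fun r => ∑ k ∈ Finset.range p, c k * r ^ k) + c p • fun r => r ^ p := by
    ext r
    simp [Finset.sum_range_succ]
  rw [hsplit, fwdDiff_iter_add, fwdDiff_iter_sum_mul_pow_eq_zero, fwdDiff_iter_const_smul,
    fwdDiff_iter_eq_factorial]
  ext r
  simp

theorem sum_alternating_choose_mul_eq_fwdDiff_iter (g : R → R) (p : ℕ) :
    ∑ j ∈ Finset.range (p + 1), (-1 : R) ^ j * p.choose j * g j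
      = (-1) ^ p * (fwdDiff 1)^[p] g 0 := by
  rw [fwdDiff_iter_eq_sum_shift, Finset.mul_sum]
  refine Finset.sum_congr rfl fun j hj => ?_
  have hjp : j ≤ p := Finset.mem_range_succ_iff.mp hj
  have hsign : (-1 : R) ^ p * (-1) ^ (p - j) = (-1) ^ j := by
    rw [← Nat.add_sub_cancel' hjp, pow_add, Nat.add_sub_cancel_left, mul_assoc, ← mul_pow]
    simp
  simp only [zsmul_eq_mul, nsmul_eq_mul, zero_add, mul_one]
  push_cast
  rw [← hsign]
  ring

end CommRing

theorem bdApprox_sub (f g : ℝ → ℝ) (τ : ℝ) (p : ℕ) (t : ℝ) :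
    bdApprox (f - g) τ p t = bdApprox f τ p t - bdApprox g τ p t := by
  simp only [bdApprox, Pi.sub_apply, mul_sub, Finset.sum_sub_distrib]

theorem bdApprox_sum_mul_pow {τ : ℝ} (hτ : τ ≠ 0) (c : ℕ → ℝ) (p : ℕ) (t : ℝ) :
    bdApprox (fun x => ∑ k ∈ Finset.range (p + 1), c k * (x - t) ^ k) τ p t = p ! * c p := by
  have hnodes : ∀ j : ℕ, ∑ k ∈ Finset.range (p + 1), c k * (t - j * τ - t) ^ k
      = ∑ k ∈ Finset.range (p + 1), c k * (-τ) ^ k * (j : ℝ) ^ k :=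
    fun j => Finset.sum_congr rfl fun k _ => by ring
  simp only [bdApprox, hnodes]
  rw [sum_alternating_choose_mul_eq_fwdDiff_iter
      (fun r => ∑ k ∈ Finset.range (p + 1), c k * (-τ) ^ k * r ^ k),
    fwdDiff_iter_sum_mul_pow_eq_mul_factorial, zpow_neg, zpow_natCast, neg_pow τ]
  field_simp
  rw [← pow_mul, pow_mul', neg_one_sq, one_pow, one_mul]

theorem bdApprox_taylorWithinEval {τ : ℝ} (hτ : τ ≠ 0) (f : ℝ → ℝ) (p : ℕ) (s : Set ℝ)
    (t : ℝ) : bdApprox (taylorWithinEval f p s t) τ p t = iteratedDerivWithin p f s t := by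
  have htaylor : taylorWithinEval f p s t = fun x => ∑ k ∈ Finset.range (p + 1),
      iteratedDerivWithin k f s t / k ! * (x - t) ^ k := by
    ext x
    rw [taylor_within_apply]
    exact Finset.sum_congr rfl fun k _ => by rw [smul_eq_mul]; ring
  rw [htaylor, bdApprox_sum_mul_pow hτ]
  field_simp

theorem abs_iteratedDerivWithin_sub_bdApprox_le {ξ : ℝ → ℝ} {a b τ t C : ℝ} {p : ℕ}
    (hτ : 0 < τ) (hξ : ContDiffOn ℝ (p + 1) ξ (Icc a b)) (ht : t ∈ Icc a b)
    (hp : a ≤ t - p * τ)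
    (hC : ∀ y ∈ Icc a b, |iteratedDerivWithin (p + 1) ξ (Icc a b) y| ≤ C) :
    |iteratedDerivWithin p ξ (Icc a b) t - bdApprox ξ τ p t|
      ≤ τ * C / (p + 1)! * ∑ j ∈ Finset.Icc 1 p, (p.choose j : ℝ) * (j : ℝ) ^ (p + 1) := by
  set T := taylorWithinEval ξ p (Icc a b) t
  have hremainder : ∀ j ∈ Finset.range (p + 1),
      |(T - ξ) (t - j * τ)| ≤ C * (j * τ) ^ (p + 1) / (p + 1)! := by
    intro j hj
    have hjp : (j : ℝ) ≤ p := by exact_mod_cast Finset.mem_range_succ_iff.mp hj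
    have hnode : t - j * τ ∈ Icc a b := ⟨by nlinarith, by nlinarith [ht.2]⟩
    have hdist : |t - j * τ - t| = j * τ := by
      rw [sub_sub_cancel_left, abs_neg, abs_of_nonneg (mul_nonneg j.cast_nonneg hτ.le)]
    have htaylor := abs_sub_taylorWithinEval_Icc_le hξ ht hnode hC
    rw [hdist] at htaylor
    rw [Pi.sub_apply, abs_sub_comm]
    exact htaylor
  rw [← bdApprox_taylorWithinEval hτ.ne' ξ p (Icc a b) t, ← bdApprox_sub, bdApprox, abs_mul,
    zpow_neg, zpow_natCast, abs_inv, abs_of_pos (pow_pos hτ p)]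
  calc (τ ^ p)⁻¹
        * |∑ j ∈ Finset.range (p + 1), (-1) ^ j * (p.choose j : ℝ) * (T - ξ) (t - j * τ)|
      ≤ (τ ^ p)⁻¹ * ∑ j ∈ Finset.range (p + 1),
          (p.choose j : ℝ) * (C * (j * τ) ^ (p + 1) / (p + 1)!) := by
        gcongr
        refine (Finset.abs_sum_le_sum_abs _ _).trans (Finset.sum_le_sum fun j hj => ?_)
        rw [abs_mul, abs_mul, abs_pow, abs_neg, abs_one, one_pow, one_mul, Nat.abs_cast]
        gcongr
        exact hremainder j hj
    _ = τ * C / (p + 1)! * ∑ j ∈ Finset.Icc 1 p, (p.choose j : ℝ) * (j : ℝ) ^ (p + 1) := by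
        rw [Finset.sum_range_succ_eq_add_sum_Icc, Nat.cast_zero, zero_mul,
          zero_pow p.succ_ne_zero, mul_zero, zero_div, mul_zero, zero_add, Finset.mul_sum,
          Finset.mul_sum]
        refine Finset.sum_congr rfl fun j _ => ?_
        rw [mul_pow, pow_succ τ]
        field_simp

end BackwardDifference

theorem prediction_error_bound_explicit_general (l m : ℕ)
    (τ : ℝ) (hτ : 0 < τ) (t : ℝ) (ξ : ℝ → ℝ)
    (hξ : ContDiffOn ℝ (l + 1) ξ (Set.Icc (t - l * τ) (t + m * τ)))
    (B : ℕ → ℝ)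
    (hbound : ∀ p ∈ Finset.Icc 1 (l + 1), ∀ s ∈ Set.Icc (t - l * τ) (t + m * τ),
      |iteratedDerivWithin p ξ (Set.Icc (t - l * τ) (t + m * τ)) s| ≤ B p) :
    |ξ (t + m * τ)
        - (ξ t + ∑ p ∈ Finset.Icc 1 l,
            bdApprox ξ τ p t / (p.factorial : ℝ) * ((m : ℝ) * τ) ^ p)|
      ≤ B (l + 1) / ((l + 1).factorial : ℝ) * ((m : ℝ) * τ) ^ (l + 1)
        + ∑ p ∈ Finset.Icc 1 l,
            ((m : ℝ) * τ) ^ p / (p.factorial : ℝ) *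
              (τ * B (p + 1) / ((p + 1).factorial : ℝ) *
                ∑ j ∈ Finset.Icc 1 p, (p.choose j : ℝ) * (j : ℝ) ^ (p + 1)) := by
  set I := Icc (t - l * τ) (t + m * τ)
  set D : ℕ → ℝ := fun p => iteratedDerivWithin p ξ I t
  have hlτ : 0 ≤ (l : ℝ) * τ := mul_nonneg l.cast_nonneg hτ.le
  have hmτ : 0 ≤ (m : ℝ) * τ := mul_nonneg m.cast_nonneg hτ.le
  have ht : t ∈ I := ⟨by linarith, by linarith⟩
  have hsplit :
      ξ (t + m * τ) - (ξ t + ∑ p ∈ Finset.Icc 1 l, bdApprox ξ τ p t / p ! * (m * τ) ^ p) =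
        (ξ (t + m * τ) - taylorWithinEval ξ l I t (t + m * τ))
        + ∑ p ∈ Finset.Icc 1 l, (D p - bdApprox ξ τ p t) / p ! * (m * τ) ^ p := by
    simp only [taylorWithinEval_eq_add_sum_Icc, add_sub_cancel_left, sub_div, sub_mul,
      Finset.sum_sub_distrib]
    ring
  rw [hsplit]
  refine (abs_add_le _ _).trans (add_le_add ?_ ?_)
  · have hrem := abs_sub_taylorWithinEval_Icc_le hξ ht ⟨by linarith, le_rfl⟩
      (hbound (l + 1) (by simp))
    rwa [add_sub_cancel_left, abs_of_nonneg hmτ, mul_div_right_comm] at hrem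
  · refine (Finset.abs_sum_le_sum_abs _ _).trans (Finset.sum_le_sum fun p hp => ?_)
    obtain ⟨-, hpl⟩ := Finset.mem_Icc.mp hp
    have hpl' : (p : ℝ) ≤ l := by exact_mod_cast hpl
    have hbd := abs_iteratedDerivWithin_sub_bdApprox_le hτ
      (hξ.of_le (by exact_mod_cast Nat.succ_le_succ hpl)) ht (by nlinarith)
      (hbound (p + 1) (Finset.mem_Icc.mpr ⟨by omega, by omega⟩))
    rw [abs_mul, abs_div, abs_pow, abs_of_nonneg hmτ, Nat.abs_cast, div_mul_comm]
    gcongr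

/-- Fully explicit, non-asymptotic form of the paper's prediction error bound
(Theorem 2), for the prediction `P̄_l(t + mτ)` made by the approximated Taylor
polynomial of degree `l` built from backward differences at `t`. -/
theorem prediction_error_bound_explicit (l m : ℕ) (hl : 1 ≤ l) (hm : 1 ≤ m)
    (τ : ℝ) (hτ : 0 < τ) (t : ℝ) (ξ : ℝ → ℝ)
    (hξ : ContDiffOn ℝ (l + 1) ξ (Set.Icc (t - l * τ) (t + m * τ)))
    (B : ℕ → ℝ) (hB : ∀ p ∈ Finset.Icc 1 (l + 1), 0 ≤ B p)
    (hbound : ∀ p ∈ Finset.Icc 1 (l + 1), ∀ s ∈ Set.Icc (t - l * τ) (t + m * τ),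
      |iteratedDerivWithin p ξ (Set.Icc (t - l * τ) (t + m * τ)) s| ≤ B p) :
    |ξ (t + m * τ)
        - (ξ t + ∑ p ∈ Finset.Icc 1 l,
            bdApprox ξ τ p t / (p.factorial : ℝ) * ((m : ℝ) * τ) ^ p)|
      ≤ B (l + 1) / ((l + 1).factorial : ℝ) * ((m : ℝ) * τ) ^ (l + 1)
        + ∑ p ∈ Finset.Icc 1 l,
            ((m : ℝ) * τ) ^ p / (p.factorial : ℝ) *
              (τ * B (p + 1) / ((p + 1).factorial : ℝ) *
                ∑ j ∈ Finset.Icc 1 p, (p.choose j : ℝ) * (j : ℝ) ^ (p + 1)) :=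
  prediction_error_bound_explicit_general l m τ hτ t ξ hξ B hbound
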